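/- arXiv:2407.00240 — 2 statements merged into one kernel-verified Lean document; each statement's English description precedes it below -/
import Mathlib

section
/- The transformed covariance of cosine under a centered bivariate Gaussian satisfies τ(cos, cos) = e^{−(σii+σjj)/2}·(cosh σij − 1); equivalently, ∫_{ℝ²} cos(x)·cos(w)·p(x,w) dx dw − e^{−σii/2}·e^{−σjj/2} = e^{−(σii+σjj)/2}·(cosh σij − 1). -/
open MeasureTheory Real

/-- Centered bivariate Gaussian density with covariance entries `σii, σjj, σij`. -/
noncomputable def gaussPDF2 (σii σjj σij : ℝ) (x w : ℝ) : ℝ :=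
  (1 / (2 * π * Real.sqrt (σii * σjj - σij ^ 2))) *
    Real.exp (-(σjj * x ^ 2 - 2 * σij * x * w + σii * w ^ 2) / (2 * (σii * σjj - σij ^ 2)))

/-- Centered univariate Gaussian density with variance `σ`. -/
noncomputable def gaussPDF1 (σ x : ℝ) : ℝ :=
  (1 / Real.sqrt (2 * π * σ)) * Real.exp (-x ^ 2 / (2 * σ))

/-- Transformed mean `ν(f)`. -/
noncomputable def transMean (σ : ℝ) (f : ℝ → ℝ) : ℝ := ∫ x : ℝ, f x * gaussPDF1 σ x

/-- Transformed covariance `τ(f, g)`. -/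
noncomputable def transCov (σii σjj σij : ℝ) (f g : ℝ → ℝ) : ℝ :=
  (∫ q : ℝ × ℝ, f q.1 * g q.2 * gaussPDF2 σii σjj σij q.1 q.2) -
    transMean σii f * transMean σjj g

/-!
Conditioning on the first coordinate factors the bivariate density as `φ_{σii}(x)` times a
Gaussian density in `w` with mean `(σij/σii)·x` and variance `d/σii`. Integrating `cos w` against
the latter gives `e^{-d/(2σii)} cos((σij/σii)·x)`, by the real part of the Gaussian characteristic
function. Writing `cos x · cos(ax) = (cos((1+a)x) + cos((1-a)x))/2` and integrating once more
against `φ_{σii}` yields `e^{-(σii+σjj)/2} cosh σij`, while the transformed means are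
`e^{-σii/2}` and `e^{-σjj/2}`.
-/

open ProbabilityTheory
open scoped NNReal

lemma integral_cos_mul_gaussianReal (μ : ℝ) (v : ℝ≥0) (t : ℝ) :
    ∫ x, cos (t * x) ∂gaussianReal μ v = exp (-(v * t ^ 2 / 2)) * cos (t * μ) := by
  have hint : Integrable (fun x : ℝ => Complex.exp (t * x * Complex.I)) (gaussianReal μ v) :=
    Integrable.of_bound (by fun_prop) 1
      (ae_of_all _ fun x => by rw [← Complex.ofReal_mul, Complex.norm_exp_ofReal_mul_I])
  have h := congrArg Complex.re (charFun_gaussianReal (μ := μ) (v := v) t)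
  rw [charFun_apply_real, ← RCLike.re_to_complex, ← integral_re hint] at h
  simpa [Complex.exp_re, ← Complex.ofReal_pow, mul_comm] using h

lemma gaussPDF1_eq_gaussianPDFReal {σ : ℝ} (hσ : 0 ≤ σ) :
    gaussPDF1 σ = gaussianPDFReal 0 σ.toNNReal := by
  ext x
  simp [gaussPDF1, gaussianPDFReal, Real.coe_toNNReal _ hσ]

lemma transMean_eq_integral_gaussianReal {σ : ℝ} (hσ : 0 < σ) (f : ℝ → ℝ) :
    transMean σ f = ∫ x, f x ∂gaussianReal 0 σ.toNNReal := by
  rw [integral_gaussianReal_eq_integral_smul (by simpa using hσ), transMean,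
    gaussPDF1_eq_gaussianPDFReal hσ.le]
  simp_rw [smul_eq_mul, mul_comm]

lemma transMean_cos {σ : ℝ} (hσ : 0 < σ) : transMean σ cos = exp (-σ / 2) := by
  rw [transMean_eq_integral_gaussianReal hσ]
  simpa [Real.coe_toNNReal _ hσ.le, neg_div] using integral_cos_mul_gaussianReal 0 σ.toNNReal 1

section Bivariate

variable {σii σjj σij : ℝ}

lemma gaussPDF2_eq_mul (hii : 0 < σii) (hd : 0 < σii * σjj - σij ^ 2) (x w : ℝ) :
    gaussPDF2 σii σjj σij x w = gaussianPDFReal 0 σii.toNNReal x *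
      gaussianPDFReal (σij / σii * x) ((σii * σjj - σij ^ 2) / σii).toNNReal w := by
  set d := σii * σjj - σij ^ 2
  have hs : 0 ≤ d / σii := (div_pos hd hii).le
  have hsqrt : √(2 * π * σii) * √(2 * π * (d / σii)) = 2 * π * √d := by
    rw [← Real.sqrt_mul (by positivity),
      show 2 * π * σii * (2 * π * (d / σii)) = (2 * π) ^ 2 * d by field_simp,
      Real.sqrt_mul (sq_nonneg _), Real.sqrt_sq (by positivity)]
  have hexp : -(σjj * x ^ 2 - 2 * σij * x * w + σii * w ^ 2) / (2 * d)
      = -(x - 0) ^ 2 / (2 * σii) + -(w - σij / σii * x) ^ 2 / (2 * (d / σii)) := by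
    field_simp
    ring
  rw [gaussPDF2, gaussianPDFReal, gaussianPDFReal, Real.coe_toNNReal _ hii.le,
    Real.coe_toNNReal _ hs, hexp, exp_add, ← hsqrt]
  field_simp

lemma integrable_gaussPDF2 (hii : 0 < σii) (hd : 0 < σii * σjj - σij ^ 2) :
    Integrable (fun q : ℝ × ℝ => gaussPDF2 σii σjj σij q.1 q.2) := by
  simp_rw [gaussPDF2_eq_mul hii hd]
  set s := ((σii * σjj - σij ^ 2) / σii).toNNReal
  have hs : s ≠ 0 := by simpa [s] using div_pos hd hii
  rw [Measure.volume_eq_prod, integrable_prod_iff (by fun_prop)]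
  refine ⟨ae_of_all _ fun x => (integrable_gaussianPDFReal (σij / σii * x) s).const_mul
    (gaussianPDFReal 0 σii.toNNReal x), ?_⟩
  simp only [norm_mul, Real.norm_of_nonneg (gaussianPDFReal_nonneg _ _ _), integral_const_mul,
    integral_gaussianPDFReal_eq_one _ hs, mul_one]
  exact integrable_gaussianPDFReal _ _

lemma integral_mul_gaussPDF2 (hii : 0 < σii) (hd : 0 < σii * σjj - σij ^ 2) {f g : ℝ → ℝ}
    (hfg : Integrable (fun q : ℝ × ℝ => f q.1 * g q.2 * gaussPDF2 σii σjj σij q.1 q.2)) :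
    ∫ q : ℝ × ℝ, f q.1 * g q.2 * gaussPDF2 σii σjj σij q.1 q.2 =
      ∫ x, f x * ∫ w, g w ∂gaussianReal (σij / σii * x) ((σii * σjj - σij ^ 2) / σii).toNNReal
        ∂gaussianReal 0 σii.toNNReal := by
  have hv : σii.toNNReal ≠ 0 := by simpa using hii
  have hs : ((σii * σjj - σij ^ 2) / σii).toNNReal ≠ 0 := by simpa using div_pos hd hii
  rw [Measure.volume_eq_prod] at hfg ⊢
  rw [integral_prod _ hfg, integral_gaussianReal_eq_integral_smul hv]
  congr 1 with x
  rw [integral_gaussianReal_eq_integral_smul hs, smul_eq_mul, ← integral_const_mul,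
    ← integral_const_mul]
  congr 1 with w
  rw [gaussPDF2_eq_mul hii hd, smul_eq_mul]
  ring

lemma integral_cos_mul_cos_gaussPDF2 (hii : 0 < σii) (hd : 0 < σii * σjj - σij ^ 2) :
    ∫ q : ℝ × ℝ, cos q.1 * cos q.2 * gaussPDF2 σii σjj σij q.1 q.2 =
      exp (-(σii + σjj) / 2) * cosh σij := by
  have hint : Integrable (fun q : ℝ × ℝ => cos q.1 * cos q.2 * gaussPDF2 σii σjj σij q.1 q.2) :=
    (integrable_gaussPDF2 hii hd).bdd_mul (c := 1) (by fun_prop) (ae_of_all _ fun q => by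
      simpa [abs_mul] using mul_le_one₀ (abs_cos_le_one q.1) (abs_nonneg _) (abs_cos_le_one q.2))
  rw [integral_mul_gaussPDF2 hii hd hint]
  set a := σij / σii
  set s := (σii * σjj - σij ^ 2) / σii
  have hs : 0 ≤ s := (div_pos hd hii).le
  have hinner : ∀ x, cos x * ∫ w, cos w ∂gaussianReal (a * x) s.toNNReal
      = exp (-(s / 2)) / 2 * (cos ((1 + a) * x) + cos ((1 - a) * x)) := by
    intro x
    have h := integral_cos_mul_gaussianReal (a * x) s.toNNReal 1
    simp only [one_mul, one_pow, mul_one, Real.coe_toNNReal _ hs] at h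
    rw [h, add_mul, sub_mul, one_mul, cos_add, cos_sub]
    ring
  have hcos (t : ℝ) : Integrable (fun x => cos (t * x)) (gaussianReal 0 σii.toNNReal) :=
    Integrable.of_bound (by fun_prop) 1 (ae_of_all _ fun x => by simpa using abs_cos_le_one _)
  simp_rw [hinner]
  rw [integral_const_mul, integral_add (hcos _) (hcos _), integral_cos_mul_gaussianReal,
    integral_cos_mul_gaussianReal, Real.coe_toNNReal _ hii.le, cosh_eq]
  simp only [mul_zero, cos_zero, mul_one]
  have hplus : -(s / 2) + -(σii * (1 + a) ^ 2 / 2) = -(σii + σjj) / 2 + -σij := by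
    simp only [s, a]; field_simp; ring
  have hminus : -(s / 2) + -(σii * (1 - a) ^ 2 / 2) = -(σii + σjj) / 2 + σij := by
    simp only [s, a]; field_simp; ring
  calc _ = (exp (-(s / 2) + -(σii * (1 + a) ^ 2 / 2))
          + exp (-(s / 2) + -(σii * (1 - a) ^ 2 / 2))) / 2 := by rw [exp_add, exp_add]; ring
    _ = _ := by rw [hplus, hminus, exp_add, exp_add]; ring

end Bivariate

theorem transformed_covariance_cos
    (σii σjj σij : ℝ) (hii : 0 < σii) (hjj : 0 < σjj)
    (hd : 0 < σii * σjj - σij ^ 2) :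
    transCov σii σjj σij Real.cos Real.cos =
      Real.exp (-(σii + σjj) / 2) * (Real.cosh σij - 1) ∧
    (∫ q : ℝ × ℝ, Real.cos q.1 * Real.cos q.2 * gaussPDF2 σii σjj σij q.1 q.2) -
        Real.exp (-σii / 2) * Real.exp (-σjj / 2) =
      Real.exp (-(σii + σjj) / 2) * (Real.cosh σij - 1) := by
  have hcos := integral_cos_mul_cos_gaussPDF2 hii hd
  have hmeans : exp (-σii / 2) * exp (-σjj / 2) = exp (-(σii + σjj) / 2) := by
    rw [← exp_add]; ring_nf
  refine ⟨?_, ?_⟩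
  · rw [transCov, hcos, transMean_cos hii, transMean_cos hjj, hmeans]
    ring
  · rw [hcos, hmeans]
    ring
end

section
/- Let n ≥ 1 and f(x) := x^{2n}/(2n)!. Then the transformed covariance satisfies τ(f,f) = (σiiⁿ·σjjⁿ/2^{2n})·Σ_{k=1}^{n} (1/((n−k)!²·(2k)!))·(4·σij²/(σii·σjj))ᵏ. -/
open MeasureTheory Real

/-!
Conditioning on the first coordinate factors the bivariate density as
`φ_{σii}(x) · φ_c(w - a x)` with `a = σij / σii` and `c = d / σii`. After the shear
`w = u + a x`, the joint moment `∫∫ x^p w^q p(x, w)` becomes the binomial sum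
`∑ᵢ C(q, i) a^(q-i) ν(x^(p+q-i)) ν_c(u^i)`, in which only even `i` survive, and
`ν(x^(2k)) = σ^k (2k-1)‼`. In the variables `t = σij²` and `d = σii σjj - t`, the claimed
formula then amounts, coefficient by coefficient, to
`∑ₖ 4^k / ((2k)! (n-k)! (m-k)!) = (2(n+m))! / ((2n)! (2m)! (n+m)!)`, which is the coefficient
of `X^(2n)` in `(1 + X)^(2(n+m)) = (1 + X (X + 2))^(n+m)`. The `k = 0` term of the resulting
sum is the product of the two means, which the covariance subtracts.
-/

open scoped Nat

lemma Nat.factorial_two_mul_eq_mul_doubleFactorial (k : ℕ) :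
    (2 * k)! = 2 ^ k * k ! * (2 * k - 1)‼ := by
  cases k with
  | zero => rfl
  | succ k =>
    rw [show 2 * (k + 1) = 2 * k + 1 + 1 by ring, Nat.factorial_eq_mul_doubleFactorial,
      show 2 * k + 1 + 1 = 2 * (k + 1) by ring, Nat.doubleFactorial_two_mul]
    rfl

lemma Nat.cast_doubleFactorial_two_mul_sub_one (k : ℕ) :
    ((2 * k - 1)‼ : ℝ) = (2 * k)! / (2 ^ k * k !) := by
  rw [Nat.factorial_two_mul_eq_mul_doubleFactorial]
  push_cast
  field_simp

lemma Finset.sum_range_two_mul_add_one_of_odd_eq_zero {M : Type*} [AddCommMonoid M] {f : ℕ → M}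
    (hf : ∀ j, f (2 * j + 1) = 0) (N : ℕ) :
    ∑ i ∈ Finset.range (2 * N + 1), f i = ∑ j ∈ Finset.range (N + 1), f (2 * j) := by
  induction N with
  | zero => simp
  | succ N ih =>
    rw [show 2 * (N + 1) + 1 = 2 * N + 1 + 1 + 1 by ring, Finset.sum_range_succ,
      Finset.sum_range_succ, ih, hf, add_zero, Finset.sum_range_succ (n := N + 1)]
    rfl

open Polynomial in
lemma Nat.choose_two_mul_add_two_mul_eq_sum_four_pow {n m : ℕ} (h : m ≤ n) :
    (2 * (n + m)).choose (2 * n) =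
      ∑ k ∈ Finset.range (m + 1), 4 ^ k * (n + m).choose (n + k) * (n + k).choose (n - k) := by
  have hsq : (X + 1 : ℕ[X]) ^ 2 = X * (X + C 2) + 1 := by
    rw [show (C 2 : ℕ[X]) = 2 by rfl]
    ring
  have hcoeff (r : ℕ) (hr : r ≤ 2 * n) :
      ((X * (X + C 2) : ℕ[X]) ^ r * 1 ^ (n + m - r) * ((n + m).choose r : ℕ[X])).coeff (2 * n) =
        2 ^ (r - (2 * n - r)) * r.choose (2 * n - r) * (n + m).choose r := by
    rw [one_pow, mul_one, ← C_eq_natCast, coeff_mul_C, mul_pow, coeff_X_pow_mul', if_pos hr,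
      coeff_X_add_C_pow]
    simp
  have key := coeff_X_add_one_pow ℕ (2 * (n + m)) (2 * n)
  rw [pow_mul, hsq, add_pow, finsetSum_coeff, Nat.cast_id] at key
  rw [← key, Finset.range_eq_Ico,
    ← Finset.sum_Ico_consecutive _ (Nat.zero_le n) (by omega : n ≤ n + m + 1),
    Finset.sum_eq_zero (s := Finset.Ico 0 n), zero_add, Finset.sum_Ico_eq_sum_range,
    show n + m + 1 - n = m + 1 by omega]
  · refine Finset.sum_congr rfl fun k hk => ?_
    rw [Finset.mem_range] at hk
    rw [hcoeff _ (by omega), show 2 * n - (n + k) = n - k by omega,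
      show n + k - (n - k) = 2 * k by omega, pow_mul]
    ring
  · intro r hr
    rw [Finset.mem_Ico] at hr
    rw [hcoeff _ (by omega), Nat.choose_eq_zero_of_lt (by omega), mul_zero, zero_mul]

lemma sum_four_pow_div_factorials_eq {n m : ℕ} (h : m ≤ n) :
    ∑ k ∈ Finset.range (m + 1), (4 : ℝ) ^ k / ((2 * k)! * (n - k)! * (m - k)!) =
      (2 * (n + m))! / ((2 * n)! * (2 * m)! * (n + m)!) := by
  have hterm (k : ℕ) (hk : k ∈ Finset.range (m + 1)) :
      (4 : ℝ) ^ k / ((2 * k)! * (n - k)! * (m - k)!) =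
        ((n + m)! : ℝ)⁻¹ * (4 ^ k * (n + m).choose (n + k) * (n + k).choose (n - k)) := by
    rw [Finset.mem_range] at hk
    rw [Nat.cast_choose ℝ (by omega : n + k ≤ n + m),
      Nat.cast_choose ℝ (by omega : n - k ≤ n + k), show n + m - (n + k) = m - k by omega,
      show n + k - (n - k) = 2 * k by omega]
    field_simp
  have hchoose : ((2 * (n + m)).choose (2 * n) : ℝ) =
      ∑ k ∈ Finset.range (m + 1),
        (4 : ℝ) ^ k * (n + m).choose (n + k) * (n + k).choose (n - k) := by
    exact_mod_cast Nat.choose_two_mul_add_two_mul_eq_sum_four_pow h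
  rw [Finset.sum_congr rfl hterm, ← Finset.mul_sum, ← hchoose,
    Nat.cast_choose ℝ (by omega : 2 * n ≤ 2 * (n + m)),
    show 2 * (n + m) - 2 * n = 2 * m by omega]
  field_simp

lemma sum_four_pow_mul_choose_div_factorials_eq {n j : ℕ} (hj : j ≤ n) :
    ∑ k ∈ Finset.range (n + 1), (4 : ℝ) ^ k * (n - k).choose j / ((2 * k)! * (n - k)! ^ 2) =
      (2 * (2 * n - j))! / ((2 * n)! * (2 * n - 2 * j)! * (2 * n - j)! * j !) := by
  have hterm (k : ℕ) (hk : k ∈ Finset.range (n - j + 1)) :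
      (4 : ℝ) ^ k * (n - k).choose j / ((2 * k)! * (n - k)! ^ 2) =
        (j ! : ℝ)⁻¹ * (4 ^ k / ((2 * k)! * (n - k)! * (n - j - k)!)) := by
    rw [Finset.mem_range] at hk
    rw [Nat.cast_choose ℝ (by omega : j ≤ n - k), show n - k - j = n - j - k by omega]
    field_simp
  rw [← Finset.sum_subset (Finset.range_subset_range.mpr (by omega : n - j + 1 ≤ n + 1)),
    Finset.sum_congr rfl hterm, ← Finset.mul_sum,
    sum_four_pow_div_factorials_eq (by omega : n - j ≤ n),
    show n + (n - j) = 2 * n - j by omega, show 2 * (n - j) = 2 * n - 2 * j by omega]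
  · field_simp
  · intro k hk hk'
    simp only [Finset.mem_range] at hk hk'
    rw [Nat.choose_eq_zero_of_lt (by omega), Nat.cast_zero, mul_zero, zero_div]

lemma sum_factorial_div_mul_pow_mul_pow_eq (n : ℕ) (t D : ℝ) :
    ∑ j ∈ Finset.range (n + 1),
        (2 * (2 * n - j))! / ((2 * n - 2 * j)! * (2 * n - j)! * j !) * t ^ (n - j) * D ^ j =
      (2 * n)! * ∑ k ∈ Finset.range (n + 1),
        4 ^ k / ((2 * k)! * (n - k)! ^ 2) * t ^ k * (t + D) ^ (n - k) := by
  have hexpand (k : ℕ) (hk : k ∈ Finset.range (n + 1)) :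
      4 ^ k / ((2 * k)! * (n - k)! ^ 2) * t ^ k * (t + D) ^ (n - k) =
        ∑ j ∈ Finset.range (n + 1),
          4 ^ k * (n - k).choose j / ((2 * k)! * (n - k)! ^ 2) * (t ^ (n - j) * D ^ j) := by
    rw [Finset.mem_range] at hk
    rw [add_comm t, add_pow, Finset.mul_sum, ← Finset.sum_subset
      (Finset.range_subset_range.mpr (by omega : n - k + 1 ≤ n + 1))]
    · refine Finset.sum_congr rfl fun j hj => ?_
      rw [Finset.mem_range] at hj
      rw [show n - j = k + (n - k - j) by omega, pow_add]
      ring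
    · intro j _ hj
      rw [Finset.mem_range] at hj
      rw [Nat.choose_eq_zero_of_lt (by omega)]
      simp
  rw [Finset.sum_congr rfl hexpand, Finset.sum_comm, Finset.mul_sum]
  refine Finset.sum_congr rfl fun j hj => ?_
  rw [← Finset.sum_mul, sum_four_pow_mul_choose_div_factorials_eq (Nat.le_of_lt_succ
    (Finset.mem_range.mp hj))]
  field_simp

lemma integrable_pow_mul_gaussPDF1 {σ : ℝ} (hσ : 0 < σ) (k : ℕ) :
    Integrable fun x : ℝ => x ^ k * gaussPDF1 σ x := by
  have hb : 0 < 1 / (2 * σ) := by positivity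
  have hk : (-1 : ℝ) < k := by linarith [k.cast_nonneg (α := ℝ)]
  refine ((integrable_rpow_mul_exp_neg_mul_sq hb hk).const_mul (1 / √(2 * π * σ))).congr
    (.of_forall fun x => ?_)
  simp only [gaussPDF1, Real.rpow_natCast]
  ring_nf

lemma transMean_pow_odd (σ : ℝ) (k : ℕ) : transMean σ (· ^ (2 * k + 1)) = 0 := by
  have hodd (x : ℝ) :
      (-x) ^ (2 * k + 1) * gaussPDF1 σ (-x) = -(x ^ (2 * k + 1) * gaussPDF1 σ x) := by
    simp [gaussPDF1, Odd.neg_pow (odd_two_mul_add_one k)]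
  have := integral_neg_eq_self (fun x : ℝ => x ^ (2 * k + 1) * gaussPDF1 σ x) volume
  simp only [hodd, integral_neg] at this
  exact neg_eq_self.mp this

lemma transMean_pow_two_mul {σ : ℝ} (hσ : 0 < σ) (k : ℕ) :
    transMean σ (· ^ (2 * k)) = σ ^ k * (2 * k - 1)‼ := by
  have hb : 0 < 1 / (2 * σ) := by positivity
  have h2σ : (0:ℝ) < 2 * σ := by positivity
  have hq : (-1 : ℝ) < 2 * k := by linarith [k.cast_nonneg (α := ℝ)]
  have habs (x : ℝ) : x ^ (2 * k) * gaussPDF1 σ x =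
      1 / √(2 * π * σ) * (|x| ^ (2 * k : ℝ) * exp (-(1 / (2 * σ)) * |x| ^ (2 : ℝ))) := by
    rw [show (2 * k : ℝ) = ((2 * k : ℕ) : ℝ) by push_cast; ring, Real.rpow_natCast,
      Real.rpow_two, (even_two_mul k).pow_abs, sq_abs, gaussPDF1]
    ring_nf
  have hhalf : ((2 * k : ℝ) + 1) / 2 = k + 1 / 2 := by ring
  have hpow : (1 / (2 * σ)) ^ (-((2 * k : ℝ) + 1) / 2) = (2 * σ) ^ k * √(2 * σ) := by
    rw [one_div, Real.inv_rpow h2σ.le, ← Real.rpow_neg h2σ.le,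
      show -(-((2 * k : ℝ) + 1) / 2) = k + 1 / 2 by ring, Real.rpow_add h2σ, Real.rpow_natCast,
      Real.sqrt_eq_rpow]
  calc transMean σ (· ^ (2 * k))
      = 1 / √(2 * π * σ) * (2 * ∫ x in Set.Ioi (0 : ℝ),
          x ^ (2 * k : ℝ) * exp (-(1 / (2 * σ)) * x ^ (2 : ℝ))) := by
        simp_rw [transMean, habs, integral_const_mul, integral_comp_abs
          (f := fun x => x ^ (2 * k : ℝ) * exp (-(1 / (2 * σ)) * x ^ (2 : ℝ)))]
    _ = σ ^ k * (2 * k - 1)‼ := by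
        rw [integral_rpow_mul_exp_neg_mul_rpow two_pos hq hb, hhalf, Real.Gamma_nat_add_half, hpow,
          show 2 * π * σ = (2 * σ) * π by ring, Real.sqrt_mul h2σ.le, mul_pow]
        have : 0 < √(2 * σ) := by positivity
        have : 0 < √π := by positivity
        field_simp

lemma gaussPDF2_eq_mul_gaussPDF1 {σii σjj σij : ℝ} (hii : 0 < σii)
    (hd : 0 < σii * σjj - σij ^ 2) (x w : ℝ) :
    gaussPDF2 σii σjj σij x w =
      gaussPDF1 σii x * gaussPDF1 ((σii * σjj - σij ^ 2) / σii) (w - σij / σii * x) := by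
  set d := σii * σjj - σij ^ 2 with hd_def
  have hsqrt : √(2 * π * σii) * √(2 * π * (d / σii)) = 2 * π * √d := by
    rw [← Real.sqrt_mul (by positivity),
      show 2 * π * σii * (2 * π * (d / σii)) = (2 * π) ^ 2 * d by field_simp,
      Real.sqrt_mul (by positivity), Real.sqrt_sq (by positivity)]
  have hexp : -x ^ 2 / (2 * σii) + -(w - σij / σii * x) ^ 2 / (2 * (d / σii)) =
      -(σjj * x ^ 2 - 2 * σij * x * w + σii * w ^ 2) / (2 * d) := by
    field_simp
    rw [hd_def]
    ring
  rw [gaussPDF1, gaussPDF1, mul_mul_mul_comm, ← Real.exp_add, hexp, one_div_mul_one_div, hsqrt,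
    gaussPDF2]

def shearEquiv (a : ℝ) : ℝ × ℝ ≃ᵐ ℝ × ℝ where
  toFun z := (z.1, z.2 + a * z.1)
  invFun z := (z.1, z.2 - a * z.1)
  left_inv z := by simp
  right_inv z := by simp
  measurable_toFun := by
    change Measurable fun z : ℝ × ℝ => (z.1, z.2 + a * z.1)
    fun_prop
  measurable_invFun := by
    change Measurable fun z : ℝ × ℝ => (z.1, z.2 - a * z.1)
    fun_prop

lemma measurePreserving_shearEquiv (a : ℝ) :
    MeasurePreserving (shearEquiv a) (volume : Measure (ℝ × ℝ)) volume :=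
  (MeasurePreserving.id volume).skew_product (g := fun x u => u + a * x) (by fun_prop)
    (ae_of_all _ fun x => map_add_right_eq_self volume (a * x))

lemma integral_pow_mul_pow_mul_gaussPDF2 {σii σjj σij : ℝ} (hii : 0 < σii)
    (hd : 0 < σii * σjj - σij ^ 2) (p q : ℕ) :
    ∫ z : ℝ × ℝ, z.1 ^ p * z.2 ^ q * gaussPDF2 σii σjj σij z.1 z.2 =
      ∑ i ∈ Finset.range (q + 1), (σij / σii) ^ (q - i) * q.choose i *
        transMean σii (· ^ (p + (q - i))) *
          transMean ((σii * σjj - σij ^ 2) / σii) (· ^ i) := by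
  have hc : 0 < (σii * σjj - σij ^ 2) / σii := by positivity
  have hsheared (z : ℝ × ℝ) :
      (shearEquiv (σij / σii) z).1 ^ p * (shearEquiv (σij / σii) z).2 ^ q *
          gaussPDF2 σii σjj σij (shearEquiv (σij / σii) z).1 (shearEquiv (σij / σii) z).2 =
        ∑ i ∈ Finset.range (q + 1), (σij / σii) ^ (q - i) * q.choose i *
          ((z.1 ^ (p + (q - i)) * gaussPDF1 σii z.1) *
            (z.2 ^ i * gaussPDF1 ((σii * σjj - σij ^ 2) / σii) z.2)) := by
    simp only [shearEquiv, MeasurableEquiv.coe_mk, Equiv.coe_fn_mk,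
      gaussPDF2_eq_mul_gaussPDF1 hii hd, add_sub_cancel_right, add_pow, Finset.mul_sum,
      Finset.sum_mul]
    refine Finset.sum_congr rfl fun i _ => ?_
    ring
  rw [← (measurePreserving_shearEquiv (σij / σii)).integral_comp', Measure.volume_eq_prod]
  simp_rw [hsheared]
  rw [integral_finsetSum _ fun i _ => ((integrable_pow_mul_gaussPDF1 hii _).mul_prod
    (integrable_pow_mul_gaussPDF1 hc i)).const_mul _]
  refine Finset.sum_congr rfl fun i _ => ?_
  rw [integral_const_mul, integral_prod_mul (fun x => x ^ (p + (q - i)) * gaussPDF1 σii x)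
    (fun w => w ^ i * gaussPDF1 ((σii * σjj - σij ^ 2) / σii) w)]
  simp only [transMean]
  ring

lemma integral_pow_two_mul_mul_pow_two_mul_mul_gaussPDF2 {σii σjj σij : ℝ} (hii : 0 < σii)
    (hd : 0 < σii * σjj - σij ^ 2) (n : ℕ) :
    ∫ z : ℝ × ℝ, z.1 ^ (2 * n) * z.2 ^ (2 * n) * gaussPDF2 σii σjj σij z.1 z.2 =
      (2 * n)! ^ 2 / 4 ^ n * ∑ k ∈ Finset.range (n + 1),
        4 ^ k / ((2 * k)! * (n - k)! ^ 2) * (σij ^ 2) ^ k * (σii * σjj) ^ (n - k) := by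
  have hc : 0 < (σii * σjj - σij ^ 2) / σii := by positivity
  have hterm (j : ℕ) (hj : j ∈ Finset.range (n + 1)) :
      (σij / σii) ^ (2 * n - 2 * j) * (2 * n).choose (2 * j) *
          transMean σii (· ^ (2 * n + (2 * n - 2 * j))) *
          transMean ((σii * σjj - σij ^ 2) / σii) (· ^ (2 * j)) =
        (2 * n)! / 4 ^ n * ((2 * (2 * n - j))! / ((2 * n - 2 * j)! * (2 * n - j)! * j !) *
          (σij ^ 2) ^ (n - j) * (σii * σjj - σij ^ 2) ^ j) := by
    rw [Finset.mem_range] at hj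
    rw [show 2 * n + (2 * n - 2 * j) = 2 * (2 * n - j) by omega, transMean_pow_two_mul hii,
      transMean_pow_two_mul hc, Nat.cast_doubleFactorial_two_mul_sub_one,
      Nat.cast_doubleFactorial_two_mul_sub_one, Nat.cast_choose ℝ (by omega : 2 * j ≤ 2 * n)]
    obtain ⟨m, rfl⟩ := Nat.exists_eq_add_of_le (Nat.le_of_lt_succ hj)
    rw [show 2 * (j + m) - 2 * j = 2 * m by omega, show 2 * (j + m) - j = j + 2 * m by omega,
      Nat.add_sub_cancel_left, div_pow, div_pow, pow_add σii, pow_mul,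
      show (4 : ℝ) ^ (j + m) = 2 ^ j * 2 ^ (j + 2 * m) by
        rw [← pow_add, show j + (j + 2 * m) = 2 * (j + m) by ring, pow_mul]; norm_num]
    field_simp
  rw [integral_pow_mul_pow_mul_gaussPDF2 hii hd, Finset.sum_range_two_mul_add_one_of_odd_eq_zero
    fun j => by rw [transMean_pow_odd, mul_zero], Finset.sum_congr rfl hterm, ← Finset.mul_sum,
    sum_factorial_div_mul_pow_mul_pow_eq,
    show σij ^ 2 + (σii * σjj - σij ^ 2) = σii * σjj by ring]
  ring

lemma transMean_even_monomial {σ : ℝ} (hσ : 0 < σ) (n : ℕ) :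
    transMean σ (fun x => x ^ (2 * n) / ((2 * n)! : ℝ)) = σ ^ n / (2 ^ n * n !) := by
  simp_rw [transMean, div_mul_eq_mul_div, integral_div]
  rw [← transMean, transMean_pow_two_mul hσ, Nat.cast_doubleFactorial_two_mul_sub_one]
  field_simp

lemma integral_even_monomial_mul_even_monomial_mul_gaussPDF2 {σii σjj σij : ℝ} (hii : 0 < σii)
    (hd : 0 < σii * σjj - σij ^ 2) (n : ℕ) :
    ∫ z : ℝ × ℝ, z.1 ^ (2 * n) / ((2 * n)! : ℝ) * (z.2 ^ (2 * n) / ((2 * n)! : ℝ)) *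
        gaussPDF2 σii σjj σij z.1 z.2 =
      ∑ k ∈ Finset.range (n + 1),
        4 ^ k / (4 ^ n * (2 * k)! * (n - k)! ^ 2) * (σij ^ 2) ^ k * (σii * σjj) ^ (n - k) := by
  simp_rw [div_mul_div_comm, div_mul_eq_mul_div, integral_div,
    integral_pow_two_mul_mul_pow_two_mul_mul_gaussPDF2 hii hd, Finset.mul_sum, Finset.sum_div]
  refine Finset.sum_congr rfl fun k _ => ?_
  field_simp

theorem transformed_covariance_even_monomial_general
    (σii σjj σij : ℝ) (hii : 0 < σii) (hjj : 0 < σjj)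
    (hd : 0 < σii * σjj - σij ^ 2) (n : ℕ) :
    transCov σii σjj σij
        (fun x => x ^ (2 * n) / ((2 * n).factorial : ℝ))
        (fun x => x ^ (2 * n) / ((2 * n).factorial : ℝ)) =
      (σii ^ n * σjj ^ n / 2 ^ (2 * n)) *
        ∑ k ∈ Finset.Icc 1 n,
          (1 / (((n - k).factorial : ℝ) ^ 2 * ((2 * k).factorial : ℝ))) *
            (4 * σij ^ 2 / (σii * σjj)) ^ k := by
  rw [transCov, integral_even_monomial_mul_even_monomial_mul_gaussPDF2 hii hd,
    transMean_even_monomial hii, transMean_even_monomial hjj, Finset.range_eq_Ico,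
    Finset.sum_eq_sum_Ico_succ_bot n.succ_pos, zero_add, Nat.succ_eq_add_one,
    Finset.Ico_add_one_right_eq_Icc, Finset.mul_sum]
  have hmeans :
      4 ^ 0 / (4 ^ n * (2 * 0)! * (n - 0)! ^ 2) * (σij ^ 2) ^ 0 * (σii * σjj) ^ (n - 0) =
        σii ^ n / (2 ^ n * n !) * (σjj ^ n / (2 ^ n * n !)) := by
    rw [Nat.sub_zero, show (4 : ℝ) ^ n = 2 ^ n * 2 ^ n by rw [← mul_pow]; norm_num]
    field_simp
    ring
  rw [hmeans, add_sub_cancel_left]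
  refine Finset.sum_congr rfl fun k hk => ?_
  obtain ⟨m, rfl⟩ := Nat.exists_eq_add_of_le (Finset.mem_Icc.mp hk).2
  rw [Nat.add_sub_cancel_left, pow_mul, show (2 : ℝ) ^ 2 = 4 by norm_num, div_pow, mul_pow,
    mul_pow]
  have := hii.ne'
  have := hjj.ne'
  field_simp
  ring

theorem transformed_covariance_even_monomial
    (σii σjj σij : ℝ) (hii : 0 < σii) (hjj : 0 < σjj)
    (hd : 0 < σii * σjj - σij ^ 2) (n : ℕ) (hn : 1 ≤ n) :
    transCov σii σjj σij
        (fun x => x ^ (2 * n) / ((2 * n).factorial : ℝ))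
        (fun x => x ^ (2 * n) / ((2 * n).factorial : ℝ)) =
      (σii ^ n * σjj ^ n / 2 ^ (2 * n)) *
        ∑ k ∈ Finset.Icc 1 n,
          (1 / (((n - k).factorial : ℝ) ^ 2 * ((2 * k).factorial : ℝ))) *
            (4 * σij ^ 2 / (σii * σjj)) ^ k :=
  transformed_covariance_even_monomial_general σii σjj σij hii hjj hd n
end
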